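/- Let X be a set, f : X → X a map, h : X → ℝ a function, d ≥ 2 an integer, and C ≥ 0 a constant such that |h(f(x)) - d·h(x)| ≤ C for all x ∈ X. Then for every x ∈ X the sequence n ↦ h(fⁿ(x))/dⁿ converges, and the limit ĥ(x) satisfies |ĥ(x) - h(x)| ≤ C/(d-1). -/
import Mathlib


open Filter

theorem canonical_height_exists
    {X : Type*} (f : X → X) (h : X → ℝ) (d : ℕ) (hd : 2 ≤ d)
    (C : ℝ) (hC : 0 ≤ C)
    (hquasi : ∀ x : X, |h (f x) - (d : ℝ) * h x| ≤ C) :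
    ∀ x : X, ∃ L : ℝ,
      Tendsto (fun n : ℕ => h (f^[n] x) / (d : ℝ) ^ n) atTop (nhds L) ∧
      |L - h x| ≤ C / ((d : ℝ) - 1) := by
  have hd1 : (1 : ℝ) < (d : ℝ) := by
    have : (2 : ℝ) ≤ (d : ℝ) := by exact_mod_cast hd
    linarith
  have hd0 : (0 : ℝ) < (d : ℝ) := by linarith
  have hdm1 : (0 : ℝ) < (d : ℝ) - 1 := by linarith
  intro x
  set a : ℕ → ℝ := fun n => h (f^[n] x) / (d : ℝ) ^ n with ha
  set g : ℕ → ℝ := fun n => a (n + 1) - a n with hg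
  set b : ℕ → ℝ := fun n => (C / d) * (1 / d) ^ n with hb
  have hgb : ∀ n, |g n| ≤ b n := by
    intro n
    have hdn : (0 : ℝ) < (d : ℝ) ^ (n + 1) := pow_pos hd0 (n + 1)
    have key : g n = (h (f (f^[n] x)) - (d : ℝ) * h (f^[n] x)) / (d : ℝ) ^ (n + 1) := by
      simp only [hg, ha, Function.iterate_succ_apply']
      field_simp
      ring
    have hbn : b n = C / (d : ℝ) ^ (n + 1) := by
      simp only [hb, div_pow, one_pow, div_mul_div_comm, one_mul, mul_one, ← pow_succ']
    rw [key, hbn, abs_div, abs_of_pos hdn]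
    exact div_le_div_of_nonneg_right (hquasi (f^[n] x)) hdn.le
  have hr0 : (0 : ℝ) ≤ 1 / d := by positivity
  have hr1 : 1 / (d : ℝ) < 1 := by
    rw [div_lt_one hd0]; linarith
  have hsb : Summable b := by
    exact (summable_geometric_of_lt_one hr0 hr1).mul_left _
  have hsabs : Summable fun n => |g n| :=
    hsb.of_nonneg_of_le (fun n => abs_nonneg _) hgb
  have hsg : Summable g := hsabs.of_abs
  have htsb : ∑' n, b n = C / ((d : ℝ) - 1) := by
    rw [hb, tsum_mul_left, tsum_geometric_of_lt_one hr0 hr1]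
    field_simp
  have habs : |∑' n, g n| ≤ C / ((d : ℝ) - 1) := by
    have h1 : |∑' n, g n| ≤ ∑' n, |g n| := by
      simpa [Real.norm_eq_abs] using
        norm_tsum_le_tsum_norm (f := g) (by simpa [Real.norm_eq_abs] using hsabs)
    have h2 : ∑' n, |g n| ≤ ∑' n, b n := Summable.tsum_le_tsum hgb hsabs hsb
    linarith [htsb ▸ h2]
  refine ⟨∑' n, g n + h x, ?_, by simpa using habs⟩
  have hpartial : Tendsto (fun n => ∑ i ∈ Finset.range n, g i) atTop (nhds (∑' n, g n)) :=
    hsg.hasSum.tendsto_sum_nat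
  have htel : ∀ n, ∑ i ∈ Finset.range n, g i = a n - a 0 := fun n =>
    Finset.sum_range_sub a n
  have ha0 : a 0 = h x := by simp [ha]
  have : Tendsto (fun n => a n - h x) atTop (nhds (∑' n, g n)) := by
    simpa [htel, ha0] using hpartial
  have := this.add_const (h x)
  simpa using this
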